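/- Let T be a tree containing a path of length at least three that is internally disjoint from some diametrical path of T. Then Γ_b(T) > diam(T). -/

import Mathlib

namespace AJC

variable {V : Type*}

/-- Eccentricity of a vertex: max distance to any vertex. -/
noncomputable def ecc [Fintype V] (G : SimpleGraph V) (v : V) : ℕ :=
  Finset.univ.sup (fun u => G.dist v u)

/-- Diameter: max eccentricity. -/
noncomputable def diam [Fintype V] (G : SimpleGraph V) : ℕ :=
  Finset.univ.sup (fun v => ecc G v)

/-- Radius: minimum eccentricity. -/
noncomputable def rad [Fintype V] (G : SimpleGraph V) : ℕ :=
  sInf (Set.range (ecc G))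

/-- A broadcast on `G`. -/
def IsBroadcast [Fintype V] (G : SimpleGraph V) (f : V → ℕ) : Prop :=
  ∀ v, f v ≤ ecc G v

/-- `u` hears the broadcast `f` (is dominated by `f`). -/
def Hears (G : SimpleGraph V) (f : V → ℕ) (u : V) : Prop :=
  ∃ v, 1 ≤ f v ∧ G.dist v u ≤ f v

/-- A dominating broadcast. -/
def IsDomBroadcast [Fintype V] (G : SimpleGraph V) (f : V → ℕ) : Prop :=
  IsBroadcast G f ∧ ∀ u, Hears G f u

/-- A minimal dominating broadcast: no strictly smaller broadcast is dominating. -/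
def IsMinDomBroadcast [Fintype V] (G : SimpleGraph V) (f : V → ℕ) : Prop :=
  IsDomBroadcast G f ∧ ∀ f' : V → ℕ, f' < f → ¬ IsDomBroadcast G f'

/-- The cost of a broadcast. -/
def cost [Fintype V] (f : V → ℕ) : ℕ := ∑ v, f v

/-- The upper broadcast domination number `Γ_b`. -/
noncomputable def upperBroadcastNum [Fintype V] (G : SimpleGraph V) : ℕ :=
  sSup {n | ∃ f : V → ℕ, IsMinDomBroadcast G f ∧ cost f = n}

/-- The broadcast domination number `γ_b`. -/
noncomputable def broadcastNum [Fintype V] (G : SimpleGraph V) : ℕ :=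
  sInf {n | ∃ f : V → ℕ, IsDomBroadcast G f ∧ cost f = n}

/-- The `f`-neighbourhood of `v`. -/
def Nf (G : SimpleGraph V) (f : V → ℕ) (v : V) : Set V := {u | G.dist v u ≤ f v}

/-- The `f`-boundary of `v`. -/
def Bf (G : SimpleGraph V) (f : V → ℕ) (v : V) : Set V := {u | G.dist v u = f v}

/-- The `f`-private neighbourhood of `v`. -/
def PN (G : SimpleGraph V) (f : V → ℕ) (v : V) : Set V :=
  {u | G.dist v u ≤ f v ∧ ∀ w, w ≠ v → 1 ≤ f w → ¬ G.dist w u ≤ f w}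

/-- The `f`-private boundary of `v`: vertices in `N_f[v]` not dominated once the
broadcast at `v` is decreased by one. -/
def PB [DecidableEq V] (G : SimpleGraph V) (f : V → ℕ) (v : V) : Set V :=
  {u | G.dist v u ≤ f v ∧ ¬ Hears G (Function.update f v (f v - 1)) u}

/-- A dominating set of vertices. -/
def IsDomSet (G : SimpleGraph V) (S : Finset V) : Prop :=
  ∀ v, v ∈ S ∨ ∃ u ∈ S, G.Adj u v

/-- A minimal dominating set. -/
def IsMinDomSet (G : SimpleGraph V) (S : Finset V) : Prop :=
  IsDomSet G S ∧ ∀ T ⊂ S, ¬ IsDomSet G T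

/-- An independent set of vertices. -/
def IsIndepSet (G : SimpleGraph V) (S : Finset V) : Prop :=
  ∀ u ∈ S, ∀ w ∈ S, u ≠ w → ¬ G.Adj u w

/-- The upper domination number `Γ`. -/
noncomputable def upperDomNum [Fintype V] (G : SimpleGraph V) : ℕ :=
  sSup {n | ∃ S : Finset V, IsMinDomSet G S ∧ S.card = n}

/-- The domination number `γ`. -/
noncomputable def domNum [Fintype V] (G : SimpleGraph V) : ℕ :=
  sInf {n | ∃ S : Finset V, IsDomSet G S ∧ S.card = n}

/-- The independence number `α`. -/
noncomputable def indepNum [Fintype V] (G : SimpleGraph V) : ℕ :=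
  sSup {n | ∃ S : Finset V, IsIndepSet G S ∧ S.card = n}

/-- Given a diametrical path `v 0, …, v d` of a tree, `sideTree G d v i` is the set of
vertices connected to `v i` by a path internally disjoint from the diametrical path. -/
def sideTree (G : SimpleGraph V) (d : ℕ) (v : ℕ → V) (i : ℕ) : Set V :=
  {x | ∃ p : G.Walk x (v i), p.IsPath ∧ ∀ y ∈ p.support, y ≠ v i → ∀ j ≤ d, v j ≠ y}

/-- The diameter of the subtree `T_i`. -/
noncomputable def sideDiam (G : SimpleGraph V) (d : ℕ) (v : ℕ → V) (i : ℕ) : ℕ :=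
  sSup {n | ∃ x ∈ sideTree G d v i, ∃ y ∈ sideTree G d v i, G.dist x y = n}

/-- The eccentricity of a vertex `x` within the subtree `T_i`. -/
noncomputable def sideEcc (G : SimpleGraph V) (d : ℕ) (v : ℕ → V) (i : ℕ) (x : V) : ℕ :=
  sSup {n | ∃ y ∈ sideTree G d v i, G.dist x y = n}

/-- A leaf of `G`. -/
def IsLeaf [Fintype V] (G : SimpleGraph V) [DecidableRel G.Adj] (x : V) : Prop :=
  G.degree x = 1

/-- A stem: a vertex adjacent to a leaf. -/
def IsStem [Fintype V] (G : SimpleGraph V) [DecidableRel G.Adj] (x : V) : Prop :=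
  ∃ l, IsLeaf G l ∧ G.Adj x l

/-- A strong stem: a vertex adjacent to at least two leaves. -/
def IsStrongStem [Fintype V] (G : SimpleGraph V) [DecidableRel G.Adj] (x : V) : Prop :=
  ∃ l₁ l₂, l₁ ≠ l₂ ∧ IsLeaf G l₁ ∧ IsLeaf G l₂ ∧ G.Adj x l₁ ∧ G.Adj x l₂

end AJC

/-!
Write `w 0 = v i` and `y := v i`. As `v 0, …, v d` is diametrical and `w 1, w 2, w 3` leave it
at `y`, neither end of it is `y`, so `y` has three branches, through `v (i - 1)`, `v (i + 1)` and
`w 1`, reaching depths `i`, `d - i` and `3`.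

In each branch at `y` there is a broadcast whose balls never pass `y` and which is rigid: every
smaller broadcast still dominating the branch costs at least the depth of the branch minus one,
and the full depth if it also reaches `y`. It is built by induction on the branch, summing the
rigid broadcasts of the sub-branches and raising the one at a deepest vertex by one. Summed over
all branches at `y` these dominate the tree, and a minimal dominating broadcast below the sum
pays `(i - 1) + (d - i - 1) + (3 - 1)` in the three branches and one more where `y` is heard,
`d + 1` in all.
-/

namespace SimpleGraph

variable {V : Type*} {G : SimpleGraph V}

/-- For a neighbour `b` of `y` in a tree, the subtree hanging from `y` at `b`. -/
def branch (G : SimpleGraph V) (y b : V) : Set V :=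
  {u | (G.deleteEdges {s(y, b)}).Reachable b u}

lemma mem_branch_self (y b : V) : b ∈ branch G y b := Reachable.refl b

lemma exists_walk_support_eq_map_range (f : ℕ → V) :
    ∀ n, (∀ j < n, G.Adj (f j) (f (j + 1))) →
      ∃ p : G.Walk (f 0) (f n), p.support = (List.range (n + 1)).map f
  | 0, _ => ⟨Walk.nil, by simp⟩
  | n + 1, hadj => by
    obtain ⟨p, hp⟩ := exists_walk_support_eq_map_range f n fun j hj => hadj j (by omega)
    refine ⟨p.concat (hadj n (by omega)), ?_⟩
    rw [Walk.support_concat, hp, List.range_succ (n := n + 1), List.map_append]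
    simp

lemma Connected.dist_eq_add_of_mem_support (hG : G.Connected) {x u y : V} {p : G.Walk x u}
    (hp : p.length = G.dist x u) (hy : y ∈ p.support) :
    G.dist x u = G.dist x y + G.dist y u := by
  classical
  have hsplit := congrArg Walk.length (p.take_spec hy)
  rw [Walk.length_append] at hsplit
  have := dist_le (p.takeUntil y hy)
  have := dist_le (p.dropUntil y hy)
  have := hG.dist_triangle (u := x) (v := y) (w := u)
  omega

lemma Connected.dist_eq_add_of_mem_branch_of_notMem (hG : G.Connected) {y b x u : V}
    (hx : x ∈ branch G y b) (hu : u ∉ branch G y b) :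
    G.dist x u = G.dist x y + G.dist y u := by
  obtain ⟨p, -, hp⟩ := hG.exists_path_of_dist x u
  refine hG.dist_eq_add_of_mem_support hp (not_not.1 fun hy => hu ?_)
  exact hx.trans (reachable_deleteEdges_iff_exists_walk.2
    ⟨p, fun he => hy (p.fst_mem_support_of_mem_edges he)⟩)

lemma Connected.exists_adj_mem_branch (hG : G.Connected) {y u : V} (hu : u ≠ y) :
    ∃ b, G.Adj y b ∧ u ∈ branch G y b := by
  obtain ⟨p, hp, -⟩ := hG.exists_path_of_dist y u
  cases p with
  | nil => exact absurd rfl hu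
  | cons h q =>
    refine ⟨_, h, reachable_deleteEdges_iff_exists_walk.2 ⟨q, fun he => ?_⟩⟩
    exact ((Walk.cons_isPath_iff h q).1 hp).2 (q.fst_mem_support_of_mem_edges he)

namespace IsTree

variable (hT : G.IsTree)
include hT

lemma notMem_branch {y b : V} (hyb : G.Adj y b) : y ∉ branch G y b := fun h =>
  isBridge_iff.1 (isAcyclic_iff_forall_adj_isBridge.1 hT.isAcyclic hyb) h.symm

lemma dist_eq_add_one_of_mem_branch {y b u : V} (hyb : G.Adj y b) (hu : u ∈ branch G y b) :
    G.dist y u = G.dist b u + 1 := by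
  have hswap : branch G b y = {u | (G.deleteEdges {s(y, b)}).Reachable y u} := by
    rw [branch, Sym2.eq_swap]
  have hu' : u ∉ branch G b y := by
    rw [hswap]
    exact fun h => hT.notMem_branch hyb (hu.trans h.symm)
  rw [hT.connected.dist_eq_add_of_mem_branch_of_notMem (mem_branch_self b y) hu',
    dist_eq_one_iff_adj.2 hyb]
  omega

lemma mem_branch_iff {y b u : V} (hyb : G.Adj y b) :
    u ∈ branch G y b ↔ G.dist y u = G.dist b u + 1 := by
  refine ⟨hT.dist_eq_add_one_of_mem_branch hyb, fun h => not_not.1 fun hu => ?_⟩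
  have := hT.connected.dist_eq_add_of_mem_branch_of_notMem (mem_branch_self y b) hu
  rw [dist_eq_one_iff_adj.2 hyb.symm] at this
  omega

lemma one_le_dist_of_mem_branch {y b u : V} (hyb : G.Adj y b) (hu : u ∈ branch G y b) :
    1 ≤ G.dist y u := by
  have := hT.dist_eq_add_one_of_mem_branch hyb hu
  omega

lemma notMem_branch_of_adj {y b c : V} (hyb : G.Adj y b) (hyc : G.Adj y c) (hbc : b ≠ c) :
    c ∉ branch G y b := by
  rw [hT.mem_branch_iff hyb, dist_eq_one_iff_adj.2 hyc, right_eq_add,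
    hT.connected.dist_eq_zero_iff]
  exact hbc

lemma eq_of_mem_branch {y b c u : V} (hyb : G.Adj y b) (hyc : G.Adj y c)
    (hub : u ∈ branch G y b) (huc : u ∈ branch G y c) : b = c := by
  by_contra hbc
  have h₁ := hT.connected.dist_eq_add_of_mem_branch_of_notMem hub
    (hT.notMem_branch_of_adj hyb hyc hbc)
  have h₂ := hT.dist_eq_add_one_of_mem_branch hyc huc
  rw [dist_eq_one_iff_adj.2 hyc, dist_comm (u := u), dist_comm (u := u)] at h₁
  omega

lemma dist_eq_add_of_mem_branch_of_ne {y b c x u : V} (hyb : G.Adj y b) (hyc : G.Adj y c)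
    (hbc : b ≠ c) (hx : x ∈ branch G y b) (hu : u ∈ branch G y c) :
    G.dist x u = G.dist y x + G.dist y u := by
  rw [hT.connected.dist_eq_add_of_mem_branch_of_notMem hx
    fun h => hbc (hT.eq_of_mem_branch hyb hyc h hu), dist_comm]

lemma branch_subset {y b c : V} (hyb : G.Adj y b) (hbc : G.Adj b c) (hcy : c ≠ y) :
    branch G b c ⊆ branch G y b := by
  intro u hu
  by_contra hu'
  have h₁ := hT.connected.dist_eq_add_of_mem_branch_of_notMem (mem_branch_self y b) hu'
  have h₂ := hT.connected.dist_eq_add_of_mem_branch_of_notMem hu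
    (hT.notMem_branch_of_adj hbc hyb.symm hcy)
  rw [dist_eq_one_iff_adj.2 hyb.symm] at h₁ h₂
  rw [dist_comm (u := u), dist_comm (u := u)] at h₂
  omega

lemma branch_ssubset {y b c : V} (hyb : G.Adj y b) (hbc : G.Adj b c) (hcy : c ≠ y) :
    branch G b c ⊂ branch G y b :=
  (Set.ssubset_iff_of_subset (hT.branch_subset hyb hbc hcy)).2
    ⟨b, mem_branch_self y b, hT.notMem_branch hbc⟩

lemma exists_adj_mem_branch_of_mem_branch {y b u : V} (hyb : G.Adj y b)
    (hu : u ∈ branch G y b) (hub : u ≠ b) : ∃ c, G.Adj b c ∧ c ≠ y ∧ u ∈ branch G b c := by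
  obtain ⟨c, hbc, huc⟩ := hT.connected.exists_adj_mem_branch hub
  refine ⟨c, hbc, ?_, huc⟩
  rintro rfl
  have h₁ := hT.dist_eq_add_one_of_mem_branch hyb hu
  have h₂ := hT.dist_eq_add_one_of_mem_branch hbc huc
  omega

lemma length_eq_dist_of_isPath {u v : V} {p : G.Walk u v} (hp : p.IsPath) :
    p.length = G.dist u v := by
  obtain ⟨q, hq, hql⟩ := hT.connected.exists_path_of_dist u v
  have hpq : (⟨p, hp⟩ : G.Path u v) = ⟨q, hq⟩ := (hT.isAcyclic.subsingleton_path u v).elim _ _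
  rw [← hql, show p = q from congrArg Subtype.val hpq]

lemma dist_eq_sub_of_chain {f : ℕ → V} {n : ℕ}
    (hadj : ∀ j < n, G.Adj (f j) (f (j + 1))) (hinj : ∀ j ≤ n, ∀ j' ≤ n, f j = f j' → j = j')
    {a b : ℕ} (hab : a ≤ b) (hbn : b ≤ n) : G.dist (f a) (f b) = b - a := by
  obtain ⟨p, hp⟩ := exists_walk_support_eq_map_range (fun t => f (a + t)) (b - a)
    fun j hj => hadj (a + j) (by omega)
  have hpath : p.IsPath := by
    rw [Walk.isPath_def, hp]
    refine List.Nodup.map_on (fun j hj j' hj' h => ?_) List.nodup_range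
    rw [List.mem_range] at hj hj'
    have := hinj (a + j) (by omega) (a + j') (by omega) h
    omega
  have hlen := congrArg List.length hp
  rw [Walk.length_support, List.length_map, List.length_range] at hlen
  have hdist : p.length = G.dist (f a) (f b) := by
    simpa [Nat.add_sub_cancel' hab] using hT.length_eq_dist_of_isPath hpath
  omega

lemma mem_branch_succ_of_chain {f : ℕ → V} {n : ℕ}
    (hadj : ∀ j < n, G.Adj (f j) (f (j + 1))) (hinj : ∀ j ≤ n, ∀ j' ≤ n, f j = f j' → j = j')
    {j k : ℕ} (hjk : j < k) (hk : k ≤ n) :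
    G.Adj (f j) (f (j + 1)) ∧ f k ∈ G.branch (f j) (f (j + 1)) := by
  have hadj' := hadj j (by omega)
  refine ⟨hadj', (hT.mem_branch_iff hadj').2 ?_⟩
  rw [hT.dist_eq_sub_of_chain hadj hinj hjk.le hk, hT.dist_eq_sub_of_chain hadj hinj hjk hk]
  omega

lemma mem_branch_pred_of_chain {f : ℕ → V} {n : ℕ}
    (hadj : ∀ j < n, G.Adj (f j) (f (j + 1))) (hinj : ∀ j ≤ n, ∀ j' ≤ n, f j = f j' → j = j')
    {j k : ℕ} (hkj : k < j) (hj : j ≤ n) :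
    G.Adj (f j) (f (j - 1)) ∧ f k ∈ G.branch (f j) (f (j - 1)) := by
  have hadj' : G.Adj (f j) (f (j - 1)) := by
    simpa [Nat.sub_add_cancel (show 1 ≤ j by omega)] using (hadj (j - 1) (by omega)).symm
  refine ⟨hadj', (hT.mem_branch_iff hadj').2 ?_⟩
  rw [G.dist_comm, hT.dist_eq_sub_of_chain hadj hinj hkj.le hj, G.dist_comm,
    hT.dist_eq_sub_of_chain hadj hinj (show k ≤ j - 1 by omega) (by omega)]
  omega

end IsTree

end SimpleGraph

namespace AJC

open SimpleGraph Finset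

variable {V : Type*} {G : SimpleGraph V}

lemma Hears.mono {f g : V → ℕ} {u : V} (hfg : f ≤ g) (h : Hears G f u) : Hears G g u := by
  obtain ⟨x, hx, hxu⟩ := h
  exact ⟨x, hx.trans (hfg x), hxu.trans (hfg x)⟩

/-- A ball that stops at `y` and hears a vertex of the branch at `y` through `c` is centred in
that branch. -/
lemma Hears.indicator_branch (hT : G.IsTree) {g : V → ℕ} {y c u : V}
    (hcap : ∀ x, g x ≤ G.dist y x) (hyc : G.Adj y c) (hu : u ∈ G.branch y c)
    (h : Hears G g u) : Hears G ((G.branch y c).indicator g) u := by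
  obtain ⟨x, hx, hxu⟩ := h
  have hxc : x ∈ G.branch y c := by
    by_contra hxc
    have hsplit := hT.connected.dist_eq_add_of_mem_branch_of_notMem hu hxc
    rw [G.dist_comm (u := u) (v := y), G.dist_comm (u := u) (v := x)] at hsplit
    have := hT.one_le_dist_of_mem_branch hyc hu
    have := hcap x
    omega
  exact ⟨x, by rwa [Set.indicator_of_mem hxc], by rwa [Set.indicator_of_mem hxc]⟩

section BranchSum

variable {y : V} {T : Finset V} {F : V → V → ℕ}

lemma sum_apply_eq_of_mem_branch (hT : G.IsTree) (hadj : ∀ c ∈ T, G.Adj y c)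
    (hsupp : ∀ c ∈ T, Function.support (F c) ⊆ G.branch y c) {c x : V} (hc : c ∈ T)
    (hx : x ∈ G.branch y c) : ∑ c' ∈ T, F c' x = F c x :=
  sum_eq_single_of_mem c hc fun c' hc' hne => Function.notMem_support.1 fun h =>
    hne (hT.eq_of_mem_branch (hadj c' hc') (hadj c hc) (hsupp c' hc' h) hx)

lemma exists_mem_branch_of_sum_apply_ne_zero
    (hsupp : ∀ c ∈ T, Function.support (F c) ⊆ G.branch y c) {x : V}
    (hx : ∑ c ∈ T, F c x ≠ 0) : ∃ c ∈ T, x ∈ G.branch y c := by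
  obtain ⟨c, hc, hcx⟩ := exists_ne_zero_of_sum_ne_zero hx
  exact ⟨c, hc, hsupp c hc hcx⟩

lemma sum_apply_le_dist (hT : G.IsTree) (hadj : ∀ c ∈ T, G.Adj y c)
    (hsupp : ∀ c ∈ T, Function.support (F c) ⊆ G.branch y c)
    (hle : ∀ c ∈ T, ∀ x, F c x ≤ G.dist y x) (x : V) : ∑ c ∈ T, F c x ≤ G.dist y x := by
  by_cases hx : ∑ c ∈ T, F c x = 0
  · omega
  obtain ⟨c, hc, hxc⟩ := exists_mem_branch_of_sum_apply_ne_zero hsupp hx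
  rw [sum_apply_eq_of_mem_branch hT hadj hsupp hc hxc]
  exact hle c hc x

lemma indicator_branch_le_of_le_sum (hT : G.IsTree) (hadj : ∀ c ∈ T, G.Adj y c)
    (hsupp : ∀ c ∈ T, Function.support (F c) ⊆ G.branch y c) {g : V → ℕ}
    (hg : g ≤ fun x => ∑ c ∈ T, F c x) {c : V} (hc : c ∈ T) :
    (G.branch y c).indicator g ≤ F c := by
  intro x
  by_cases hx : x ∈ G.branch y c
  · rw [Set.indicator_of_mem hx]
    exact (hg x).trans (sum_apply_eq_of_mem_branch hT hadj hsupp hc hx).le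
  · rw [Set.indicator_of_notMem hx]
    exact Nat.zero_le _

end BranchSum

variable [Fintype V]

lemma le_cost (f : V → ℕ) (x : V) : f x ≤ cost f :=
  single_le_sum (fun _ _ => Nat.zero_le _) (mem_univ x)

lemma cost_mono {f g : V → ℕ} (h : f ≤ g) : cost f ≤ cost g :=
  sum_le_sum fun x _ => h x

lemma dist_le_ecc (x u : V) : G.dist x u ≤ ecc G x :=
  le_sup (f := fun u => G.dist x u) (mem_univ u)

lemma dist_le_diam (x u : V) : G.dist x u ≤ diam G :=
  (dist_le_ecc x u).trans (le_sup (f := ecc G) (mem_univ x))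

lemma add_dist_le_diam_of_mem_branch (hT : G.IsTree) {y b c x u : V} (hyb : G.Adj y b)
    (hyc : G.Adj y c) (hbc : b ≠ c) (hx : x ∈ G.branch y b) (hu : u ∈ G.branch y c) :
    G.dist y x + G.dist y u ≤ diam G :=
  hT.dist_eq_add_of_mem_branch_of_ne hyb hyc hbc hx hu ▸ dist_le_diam x u

lemma exists_isMinDomBroadcast_le {f : V → ℕ} (hf : IsDomBroadcast G f) :
    ∃ g ≤ f, IsMinDomBroadcast G g := by
  obtain ⟨g, ⟨hgf, hg⟩, hmin⟩ :=
    wellFounded_lt.has_min {g | g ≤ f ∧ IsDomBroadcast G g} ⟨f, le_rfl, hf⟩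
  exact ⟨g, hgf, hg, fun f' hf' hdom => hmin f' ⟨hf'.le.trans hgf, hdom⟩ hf'⟩

lemma cost_le_upperBroadcastNum {g : V → ℕ} (hg : IsMinDomBroadcast G g) :
    cost g ≤ upperBroadcastNum G :=
  le_csSup ⟨cost (ecc G), by rintro n ⟨f, hf, rfl⟩; exact cost_mono hf.1.1⟩ ⟨g, hg, rfl⟩

lemma sum_cost_indicator_branch_le (hT : G.IsTree) {y : V} {T : Finset V}
    (hadj : ∀ c ∈ T, G.Adj y c) (g : V → ℕ) :
    ∑ c ∈ T, cost ((G.branch y c).indicator g) ≤ cost g := by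
  have hsupp : ∀ c ∈ T, Function.support ((G.branch y c).indicator g) ⊆ G.branch y c :=
    fun c _ => Set.support_indicator_subset
  unfold cost
  rw [sum_comm]
  refine sum_le_sum fun x _ => ?_
  by_cases hx : ∃ c ∈ T, x ∈ G.branch y c
  · obtain ⟨c, hc, hxc⟩ := hx
    rw [sum_apply_eq_of_mem_branch hT hadj hsupp hc hxc, Set.indicator_of_mem hxc]
  · push Not at hx
    rw [sum_eq_zero fun c hc => Set.indicator_of_notMem (hx c hc) g]
    exact Nat.zero_le _

/-- A rigid broadcast in the branch at `y` through `b`, of depth `dist y z`: the pieces of the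
large minimal dominating broadcast. -/
structure IsBranchBroadcast (G : SimpleGraph V) (y b z : V) (f : V → ℕ) : Prop where
  mem_branch : z ∈ G.branch y b
  dist_le_dist : ∀ u ∈ G.branch y b, G.dist y u ≤ G.dist y z
  apply_eq_dist : f z = G.dist y z
  support_subset : Function.support f ⊆ G.branch y b
  le_dist : ∀ x, f x ≤ G.dist y x
  hears : ∀ u, u = y ∨ u ∈ G.branch y b → Hears G f u
  dist_le_cost_add_one :
    ∀ g ≤ f, (∀ u ∈ G.branch y b, Hears G g u) → G.dist y z ≤ cost g + 1
  dist_le_cost :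
    ∀ g ≤ f, (∀ u ∈ G.branch y b, Hears G g u) → Hears G g y → G.dist y z ≤ cost g

/-- Each branch `c` costs `g` at least `dist y (Z c) - 1`, and the one whose ball reaches `y`
costs one more. -/
lemma sum_dist_add_one_le_cost (hT : G.IsTree) {y : V} {S T : Finset V} (hST : S ⊆ T)
    (hadj : ∀ c ∈ T, G.Adj y c) {F : V → V → ℕ} {Z : V → V}
    (hF : ∀ c ∈ T, IsBranchBroadcast G y c (Z c) (F c)) {g : V → ℕ}
    (hg : g ≤ fun x => ∑ c ∈ T, F c x) (hgT : ∀ c ∈ T, ∀ u ∈ G.branch y c, Hears G g u)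
    (hgy : Hears G g y) : ∑ c ∈ S, G.dist y (Z c) + 1 ≤ cost g + #S := by
  classical
  have hsupp c hc := (hF c hc).support_subset
  let r : V → V → ℕ := fun c => (G.branch y c).indicator g
  have hcap x : g x ≤ G.dist y x :=
    (hg x).trans (sum_apply_le_dist hT hadj hsupp (fun c hc => (hF c hc).le_dist) x)
  have hr_hears : ∀ c ∈ T, ∀ u ∈ G.branch y c, Hears G (r c) u := fun c hc u hu =>
    (hgT c hc u hu).indicator_branch hT hcap (hadj c hc) hu
  have hrc : ∀ c ∈ T, G.dist y (Z c) ≤ cost (r c) + 1 := fun c hc =>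
    (hF c hc).dist_le_cost_add_one _ (indicator_branch_le_of_le_sum hT hadj hsupp hg hc)
      (hr_hears c hc)
  obtain ⟨x₀, hx₀, hx₀y⟩ := hgy
  obtain ⟨c₀, hc₀, hx₀c₀⟩ := exists_mem_branch_of_sum_apply_ne_zero hsupp
    (show ∑ c ∈ T, F c x₀ ≠ 0 by have : g x₀ ≤ ∑ c ∈ T, F c x₀ := hg x₀; omega)
  have hr₀x₀ : r c₀ x₀ = g x₀ := Set.indicator_of_mem hx₀c₀ g
  have hr₀ : G.dist y (Z c₀) ≤ cost (r c₀) :=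
    (hF c₀ hc₀).dist_le_cost _ (indicator_branch_le_of_le_sum hT hadj hsupp hg hc₀)
      (hr_hears c₀ hc₀) ⟨x₀, hr₀x₀ ▸ hx₀, hr₀x₀ ▸ hx₀y⟩
  have htotal : ∑ c ∈ insert c₀ S, cost (r c) ≤ cost g :=
    sum_cost_indicator_branch_le hT
      (forall_mem_insert _ _ _ |>.2 ⟨hadj c₀ hc₀, fun c hc => hadj c (hST hc)⟩) g
  by_cases hc₀S : c₀ ∈ S
  · rw [insert_eq_of_mem hc₀S] at htotal
    have : ∑ c ∈ S, G.dist y (Z c) < ∑ c ∈ S, (cost (r c) + 1) :=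
      sum_lt_sum (fun c hc => hrc c (hST hc)) ⟨c₀, hc₀S, by omega⟩
    rw [sum_add_distrib, sum_const, smul_eq_mul, mul_one] at this
    omega
  · rw [sum_insert hc₀S] at htotal
    have : ∑ c ∈ S, G.dist y (Z c) ≤ ∑ c ∈ S, (cost (r c) + 1) :=
      sum_le_sum fun c hc => hrc c (hST hc)
    rw [sum_add_distrib, sum_const, smul_eq_mul, mul_one] at this
    have := le_cost (r c₀) x₀
    omega

section Update

variable [DecidableEq V]

/-- Raising the broadcast at the deepest vertex `z` from `dist b z` to `dist y z` turns a
broadcast rigid at `b` into one rigid at `y`. -/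
lemma isBranchBroadcast_update (hT : G.IsTree) {y b z : V} (hyb : G.Adj y b) {f : V → ℕ}
    (hz : z ∈ G.branch y b) (hdeep : ∀ u ∈ G.branch y b, G.dist y u ≤ G.dist y z)
    (hfz : f z = G.dist b z) (hsupp : Function.support f ⊆ G.branch y b)
    (hle : ∀ x, f x ≤ G.dist b x) (hhears : ∀ u ∈ G.branch y b, u ≠ b → Hears G f u)
    (hcost : ∀ g ≤ f, (∀ u ∈ G.branch y b, Hears G g u) → G.dist b z ≤ cost g) :
    IsBranchBroadcast G y b z (Function.update f z (G.dist y z)) := by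
  have hyz := hT.dist_eq_add_one_of_mem_branch hyb hz
  have hlt x (hx : f x ≠ 0) : f x < G.dist y x := by
    have := hT.dist_eq_add_one_of_mem_branch hyb (hsupp hx)
    have := hle x
    omega
  have hz_hears u (hu : G.dist z u ≤ G.dist y z) :
      Hears G (Function.update f z (G.dist y z)) u :=
    ⟨z, by rw [Function.update_self]; omega, by rwa [Function.update_self]⟩
  refine ⟨hz, hdeep, Function.update_self .., fun x hx => ?_, fun x => ?_, ?_, ?_, ?_⟩
  · rcases eq_or_ne x z with rfl | hxz
    · exact hz
    · exact hsupp (by rwa [Function.mem_support, Function.update_of_ne hxz] at hx)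
  · rcases eq_or_ne x z with rfl | hxz
    · rw [Function.update_self]
    · rw [Function.update_of_ne hxz]
      exact (eq_or_ne (f x) 0).elim (fun h => h ▸ Nat.zero_le _) fun h => (hlt x h).le
  · rintro u (rfl | hu)
    · exact hz_hears _ (by rw [G.dist_comm])
    · rcases eq_or_ne u b with rfl | hub
      · exact hz_hears _ (by rw [G.dist_comm]; omega)
      · exact (hhears u hu hub).mono (le_update_self_iff.2 (by omega))
  · intro g hg hgb
    by_cases hgz : G.dist y z ≤ g z
    · exact hgz.trans ((le_cost g z).trans (Nat.le_succ _))
    · have hgz' : g z ≤ f z := by omega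
      have hgf : g ≤ f :=
        Function.update_eq_self z f ▸ le_update_iff.2 ⟨hgz', (le_update_iff.1 hg).2⟩
      have := hcost g hgf hgb
      omega
  · rintro g hg - ⟨x, hx, hxy⟩
    rw [G.dist_comm] at hxy
    rcases eq_or_ne x z with rfl | hxz
    · exact hxy.trans (le_cost g x)
    · have hgx : g x ≤ f x := (le_update_iff.1 hg).2 x hxz
      have := hlt x (by omega)
      omega

lemma isBranchBroadcast_of_forall_adj_eq (hT : G.IsTree) {y b : V} (hyb : G.Adj y b)
    (hleaf : ∀ c, G.Adj b c → c = y) :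
    IsBranchBroadcast G y b b (Function.update 0 b (G.dist y b)) := by
  have hbranch : ∀ u ∈ G.branch y b, u = b := fun u hu => by
    by_contra hub
    obtain ⟨c, hbc, hcy, -⟩ := hT.exists_adj_mem_branch_of_mem_branch hyb hu hub
    exact hcy (hleaf c hbc)
  refine isBranchBroadcast_update hT hyb (mem_branch_self y b) (fun u hu => ?_) (by simp)
    (by simp) (fun _ => Nat.zero_le _) (fun u hu hub => absurd (hbranch u hu) hub)
    (fun g _ _ => by simp)
  rw [hbranch u hu]

lemma isBranchBroadcast_of_children (hT : G.IsTree) {y b : V} (hyb : G.Adj y b)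
    {S : Finset V} (hS : ∀ c, c ∈ S ↔ G.Adj b c ∧ c ≠ y) {F : V → V → ℕ} {Z : V → V}
    (hF : ∀ c ∈ S, IsBranchBroadcast G b c (Z c) (F c)) {c₀ : V} (hc₀ : c₀ ∈ S)
    (hmax : ∀ c ∈ S, G.dist b (Z c) ≤ G.dist b (Z c₀)) :
    IsBranchBroadcast G y b (Z c₀)
      (Function.update (fun x => ∑ c ∈ S, F c x) (Z c₀) (G.dist y (Z c₀))) := by
  have hadj c (hc : c ∈ S) : G.Adj b c := ((hS c).1 hc).1
  have hsub c (hc : c ∈ S) : G.branch b c ⊆ G.branch y b :=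
    hT.branch_subset hyb (hadj c hc) ((hS c).1 hc).2
  have hsupp c hc := (hF c hc).support_subset
  have hz := hsub c₀ hc₀ (hF c₀ hc₀).mem_branch
  refine isBranchBroadcast_update hT hyb hz (fun u hu => ?_) ?_ (fun x hx => ?_)
    (sum_apply_le_dist hT hadj hsupp fun c hc => (hF c hc).le_dist) (fun u hu hub => ?_)
    (fun g hg hgb => ?_)
  · rw [hT.dist_eq_add_one_of_mem_branch hyb hz]
    rcases eq_or_ne u b with rfl | hub
    · rw [dist_eq_one_iff_adj.2 hyb]
      omega
    obtain ⟨c, hbc, hcy, huc⟩ := hT.exists_adj_mem_branch_of_mem_branch hyb hu hub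
    have hc : c ∈ S := (hS c).2 ⟨hbc, hcy⟩
    rw [hT.dist_eq_add_one_of_mem_branch hyb hu]
    exact Nat.succ_le_succ (((hF c hc).dist_le_dist u huc).trans (hmax c hc))
  · rw [sum_apply_eq_of_mem_branch hT hadj hsupp hc₀ (hF c₀ hc₀).mem_branch]
    exact (hF c₀ hc₀).apply_eq_dist
  · obtain ⟨c, hc, hxc⟩ := exists_mem_branch_of_sum_apply_ne_zero hsupp hx
    exact hsub c hc hxc
  · obtain ⟨c, hbc, hcy, huc⟩ := hT.exists_adj_mem_branch_of_mem_branch hyb hu hub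
    have hc : c ∈ S := (hS c).2 ⟨hbc, hcy⟩
    exact ((hF c hc).hears u (Or.inr huc)).mono fun x =>
      single_le_sum (f := fun c => F c x) (fun _ _ => Nat.zero_le _) hc
  · have := sum_dist_add_one_le_cost hT (singleton_subset_iff.2 hc₀) hadj hF hg
      (fun c hc u hu => hgb u (hsub c hc hu)) (hgb b (mem_branch_self y b))
    simpa using this

end Update

theorem exists_isBranchBroadcast (hT : G.IsTree) {y b : V} (hyb : G.Adj y b) :
    ∃ z f, IsBranchBroadcast G y b z f := by
  classical
  induction hn : (G.branch y b).ncard using Nat.strong_induction_on generalizing y b with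
  | _ n ih =>
  let S := univ.filter fun c => G.Adj b c ∧ c ≠ y
  have hS c : c ∈ S ↔ G.Adj b c ∧ c ≠ y := by simp [S]
  have hchild : ∀ c ∈ S, ∃ z f, IsBranchBroadcast G b c z f := fun c hc =>
    ih _ (hn ▸ Set.ncard_lt_ncard (hT.branch_ssubset hyb ((hS c).1 hc).1 ((hS c).1 hc).2))
      ((hS c).1 hc).1 rfl
  choose! Z F hF using hchild
  rcases S.eq_empty_or_nonempty with hempty | hne
  · refine ⟨b, _, isBranchBroadcast_of_forall_adj_eq hT hyb fun c hbc => ?_⟩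
    by_contra hcy
    simpa [hempty] using (hS c).2 ⟨hbc, hcy⟩
  · obtain ⟨c₀, hc₀, hmax⟩ := S.exists_max_image (fun c => G.dist b (Z c)) hne
    exact ⟨_, _, isBranchBroadcast_of_children hT hyb hS hF hc₀ hmax⟩

lemma isDomBroadcast_sum (hT : G.IsTree) {y : V} {T : Finset V} (hmem : ∀ c, c ∈ T ↔ G.Adj y c)
    (hne : T.Nonempty) {F : V → V → ℕ} {Z : V → V}
    (hF : ∀ c ∈ T, IsBranchBroadcast G y c (Z c) (F c)) :
    IsDomBroadcast G fun x => ∑ c ∈ T, F c x := by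
  have hadj c (hc : c ∈ T) : G.Adj y c := (hmem c).1 hc
  have hle : ∀ c ∈ T, F c ≤ fun x => ∑ c ∈ T, F c x := fun c hc x =>
    single_le_sum (f := fun c => F c x) (fun _ _ => Nat.zero_le _) hc
  refine ⟨fun x => ?_, fun u => ?_⟩
  · refine (sum_apply_le_dist hT hadj (fun c hc => (hF c hc).support_subset)
      (fun c hc => (hF c hc).le_dist) x).trans ?_
    rw [G.dist_comm]
    exact dist_le_ecc x y
  · rcases eq_or_ne u y with rfl | huy
    · obtain ⟨c, hc⟩ := hne
      exact ((hF c hc).hears u (Or.inl rfl)).mono (hle c hc)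
    · obtain ⟨c, hyc, huc⟩ := hT.connected.exists_adj_mem_branch huy
      have hc := (hmem c).2 hyc
      exact ((hF c hc).hears u (Or.inr huc)).mono (hle c hc)

theorem add_dist_add_one_le_upperBroadcastNum (hT : G.IsTree) {y a b c xa xb xc : V}
    (ha : G.Adj y a) (hb : G.Adj y b) (hc : G.Adj y c) (hab : a ≠ b) (hac : a ≠ c)
    (hbc : b ≠ c) (hxa : xa ∈ G.branch y a) (hxb : xb ∈ G.branch y b)
    (hxc : xc ∈ G.branch y c) :
    G.dist y xa + G.dist y xb + G.dist y xc + 1 ≤ upperBroadcastNum G + 3 := by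
  classical
  let T := univ.filter (G.Adj y)
  have hmem c : c ∈ T ↔ G.Adj y c := by simp [T]
  have hfam : ∀ c ∈ T, ∃ z f, IsBranchBroadcast G y c z f := fun c hc =>
    exists_isBranchBroadcast hT ((hmem c).1 hc)
  choose! Z F hF using hfam
  obtain ⟨g, hgf, hg⟩ :=
    exists_isMinDomBroadcast_le (isDomBroadcast_sum hT hmem ⟨a, (hmem a).2 ha⟩ hF)
  have hS : {a, b, c} ⊆ T := by
    intro x hx
    rw [hmem]
    rcases mem_insert.1 hx with rfl | hx
    · exact ha
    rcases mem_insert.1 hx with rfl | hx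
    · exact hb
    rw [mem_singleton.1 hx]
    exact hc
  have hsum := sum_dist_add_one_le_cost hT hS (fun c hc => (hmem c).1 hc) hF hgf
    (fun _ _ u _ => hg.1.2 u) (hg.1.2 y)
  rw [sum_insert (by simp [hab, hac]), sum_insert (by simp [hbc]), sum_singleton] at hsum
  have := card_le_three (a := a) (b := b) (c := c)
  have := (hF a ((hmem a).2 ha)).dist_le_dist xa hxa
  have := (hF b ((hmem b).2 hb)).dist_le_dist xb hxb
  have := (hF c ((hmem c).2 hc)).dist_le_dist xc hxc
  have := cost_le_upperBroadcastNum hg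
  omega

theorem stmt19_general {V : Type*} [Fintype V] (G : SimpleGraph V)
    (hT : G.IsTree) (d : ℕ) (v : ℕ → V)
    (hdiam : diam G = d)
    (hadj : ∀ i < d, G.Adj (v i) (v (i + 1)))
    (hinj : ∀ i ≤ d, ∀ j ≤ d, v i = v j → i = j)
    (m : ℕ) (hm : 3 ≤ m) (w : ℕ → V)
    (hw0 : ∃ i ≤ d, w 0 = v i)
    (hwadj : ∀ j < m, G.Adj (w j) (w (j + 1)))
    (hwinj : ∀ j ≤ m, ∀ j' ≤ m, w j = w j' → j = j')
    (hoff : ∀ j, 1 ≤ j → j ≤ m → ∀ i ≤ d, v i ≠ w j) :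
    diam G < upperBroadcastNum G := by
  obtain ⟨i, hid, hw0i⟩ := hw0
  have hne j (hj : j ≤ d) : v j ≠ w 1 := hoff 1 le_rfl (by omega) j hj
  obtain ⟨hW, hxW⟩ : G.Adj (v i) (w 1) ∧ w 3 ∈ G.branch (v i) (w 1) :=
    hw0i ▸ hT.mem_branch_succ_of_chain hwadj hwinj (by omega) hm
  have hdW : G.dist (v i) (w 3) = 3 := hw0i ▸ hT.dist_eq_sub_of_chain hwadj hwinj (by omega) hm
  have hdA : G.dist (v i) (v 0) = i := by
    rw [G.dist_comm, hT.dist_eq_sub_of_chain hadj hinj (Nat.zero_le i) hid, Nat.sub_zero]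
  have hdC : G.dist (v i) (v d) = d - i := hT.dist_eq_sub_of_chain hadj hinj hid le_rfl
  have h3 : 3 ≤ d := hdW ▸ hdiam ▸ dist_le_diam (v i) (w 3)
  have hi₀ : 0 < i := by
    by_contra hi
    obtain ⟨hC, hxC⟩ := hT.mem_branch_succ_of_chain hadj hinj (show i < d by omega) le_rfl
    have := add_dist_le_diam_of_mem_branch hT hC hW (hne _ (by omega)) hxC hxW
    omega
  obtain ⟨hA, hxA⟩ := hT.mem_branch_pred_of_chain hadj hinj hi₀ hid
  have hi₁ : i < d := by
    by_contra hi
    have := add_dist_le_diam_of_mem_branch hT hA hW (hne _ (by omega)) hxA hxW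
    omega
  obtain ⟨hC, hxC⟩ := hT.mem_branch_succ_of_chain hadj hinj hi₁ le_rfl
  have hAC : v (i - 1) ≠ v (i + 1) := fun h => by
    have := hinj _ (by omega) _ (by omega) h
    omega
  have := add_dist_add_one_le_upperBroadcastNum hT hA hC hW hAC (hne _ (by omega))
    (hne _ (by omega)) hxA hxC hxW
  omega

/-- a path of length at least three internally disjoint from a
diametrical path forces `Γ_b(T) > diam(T)`. -/
theorem stmt19 {V : Type*} [Fintype V] [DecidableEq V] (G : SimpleGraph V)
    [DecidableRel G.Adj] (hT : G.IsTree) (d : ℕ) (v : ℕ → V)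
    (hdiam : diam G = d)
    (hadj : ∀ i < d, G.Adj (v i) (v (i + 1)))
    (hinj : ∀ i ≤ d, ∀ j ≤ d, v i = v j → i = j)
    (m : ℕ) (hm : 3 ≤ m) (w : ℕ → V)
    (hw0 : ∃ i ≤ d, w 0 = v i)
    (hwadj : ∀ j < m, G.Adj (w j) (w (j + 1)))
    (hwinj : ∀ j ≤ m, ∀ j' ≤ m, w j = w j' → j = j')
    (hoff : ∀ j, 1 ≤ j → j ≤ m → ∀ i ≤ d, v i ≠ w j) :
    diam G < upperBroadcastNum G :=
  stmt19_general G hT d v hdiam hadj hinj m hm w hw0 hwadj hwinj hoff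

end AJC
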